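/- arXiv:0710.0658 — 5 statements merged into one kernel-verified Lean document; each statement's English description precedes it below -/
import Mathlib

section
/- If X is a nonnegative integer random variable with P(X ≥ x) ≤ A·x^(−ε) for all x ≥ 1 (with A > 0, ε > 0), then for all sufficiently large q and all l ≥ 1, the q-ary entropy h_l of the l-th digit X(l) in the base-q expansion of X satisfies h_l ≤ B·l·q^(−lε) for a constant B depending only on A and ε. -/
/-!
The digit `X / q ^ l % q` is nonzero only on the event `q ^ l ≤ X`, of probability at most
`u = A q^(-lε)`. A distribution on `q` points with mass at most `u ≤ 1` off one point has entropy
(in nats) at most `u (1 - log u + log q)`, by Gibbs' inequality against the weights `u / q`. As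
`-log u = lε log q - log A`, dividing by `log q ≥ 1` gives the bound with `B = A (2 + ε + |log A|)`.
-/

open MeasureTheory Real Finset

namespace Real

lemma negMulLog_le_sub_sub_mul_log {t v : ℝ} (ht : 0 ≤ t) (hv : 0 < v) :
    negMulLog t ≤ v - t - t * log v := by
  have hscaled : v * negMulLog (t / v) ≤ v * (1 - t / v) :=
    mul_le_mul_of_nonneg_left (negMulLog_le_one_sub_self (by positivity)) hv.le
  calc negMulLog t = t / v * negMulLog v + v * negMulLog (t / v) := by
        rw [← negMulLog_mul, mul_div_cancel₀ _ hv.ne']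
    _ ≤ t / v * negMulLog v + v * (1 - t / v) := by gcongr
    _ = v - t - t * log v := by
        simp only [negMulLog]
        field_simp
        ring

theorem sum_negMulLog_le_of_sum_erase_le {ι : Type*} [DecidableEq ι] {s : Finset ι} {a : ι}
    (ha : a ∈ s) {p : ι → ℝ} (hp : ∀ i ∈ s, 0 ≤ p i) (hsum : ∑ i ∈ s, p i = 1) {u : ℝ}
    (hu₀ : 0 < u) (hu₁ : u ≤ 1) (hoff : ∑ i ∈ s.erase a, p i ≤ u) :
    ∑ i ∈ s, negMulLog (p i) ≤ u * (1 - log u + log #s) := by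
  set t := ∑ i ∈ s.erase a, p i
  have hcard : (1 : ℝ) ≤ #s := by exact_mod_cast card_pos.2 ⟨a, ha⟩
  have hv : 0 < u / #s := by positivity
  have hat : negMulLog (p a) ≤ t := by
    have := negMulLog_le_one_sub_self (hp a ha)
    linarith [sum_erase_add s p ha]
  -- Gibbs' inequality against the uniform weight `u / #s` on the points other than `a`.
  have hrest : ∑ i ∈ s.erase a, negMulLog (p i) ≤ u - t - t * (log u - log #s) := by
    calc ∑ i ∈ s.erase a, negMulLog (p i)
        ≤ ∑ i ∈ s.erase a, (u / #s - p i - p i * log (u / #s)) :=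
          sum_le_sum fun i hi ↦ negMulLog_le_sub_sub_mul_log (hp i (mem_of_mem_erase hi)) hv
      _ = #(s.erase a) * (u / #s) - t - t * log (u / #s) := by
          rw [sum_sub_distrib, sum_sub_distrib, sum_const, nsmul_eq_mul, ← sum_mul]
      _ ≤ u - t - t * (log u - log #s) := by
          have hcard_erase : (#(s.erase a) : ℝ) * (u / #s) ≤ u := by
            rw [mul_div_assoc', div_le_iff₀ (by positivity), mul_comm]
            gcongr
            exact erase_subset a s
          rw [log_div hu₀.ne' (by positivity)]
          linarith
  have hlog : 0 ≤ -log u + log #s := by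
    linarith [log_nonpos hu₀.le hu₁, log_nonneg hcard]
  calc ∑ i ∈ s, negMulLog (p i)
      = ∑ i ∈ s.erase a, negMulLog (p i) + negMulLog (p a) := (sum_erase_add s _ ha).symm
    _ ≤ u + t * (-log u + log #s) := by linarith
    _ ≤ u * (1 - log u + log #s) := by nlinarith

lemma neg_sum_mul_logb_eq_sum_negMulLog_div {ι : Type*} (s : Finset ι) (p : ι → ℝ) (b : ℝ) :
    -∑ i ∈ s, p i * logb b (p i) = (∑ i ∈ s, negMulLog (p i)) / log b := by
  simp only [logb, negMulLog, sum_div, ← sum_neg_distrib]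
  exact sum_congr rfl fun i _ ↦ by ring

lemma one_le_log_of_three_le {x : ℝ} (hx : 3 ≤ x) : 1 ≤ log x :=
  calc (1 : ℝ) ≤ log 3 := by linarith [log_three_gt_d9]
    _ ≤ log x := log_le_log (by norm_num) hx

end Real

lemma Nat.le_of_div_mod_ne_zero {n b q : ℕ} (h : n / b % q ≠ 0) : b ≤ n := by
  by_contra! hnb
  simp [Nat.div_eq_of_lt hnb] at h

section Digits

variable {Ω : Type*} [MeasurableSpace Ω] {μ : Measure Ω} {X : Ω → ℕ}

lemma Measurable.nat_div_mod (hX : Measurable X) (b q : ℕ) : Measurable fun ω ↦ X ω / b % q :=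
  (measurable_from_top (f := fun n : ℕ ↦ n / b % q)).comp hX

lemma sum_measureReal_digit_eq_one [IsProbabilityMeasure μ] (hX : Measurable X) {q : ℕ}
    (hq : 0 < q) (b : ℕ) : ∑ x ∈ range q, μ.real {ω | X ω / b % q = x} = 1 := by
  change ∑ x ∈ range q, μ.real ((fun ω ↦ X ω / b % q) ⁻¹' {x}) = 1
  rw [sum_measureReal_preimage_singleton _ fun x _ ↦ hX.nat_div_mod b q (measurableSet_singleton x)]
  convert probReal_univ (μ := μ)
  ext ω
  simpa using Nat.mod_lt _ hq

lemma sum_measureReal_digit_ne_zero_le [IsFiniteMeasure μ] (hX : Measurable X) (q b : ℕ) :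
    ∑ x ∈ (range q).erase 0, μ.real {ω | X ω / b % q = x} ≤ μ.real {ω | b ≤ X ω} := by
  change ∑ x ∈ (range q).erase 0, μ.real ((fun ω ↦ X ω / b % q) ⁻¹' {x}) ≤ _
  rw [sum_measureReal_preimage_singleton _ fun x _ ↦ hX.nat_div_mod b q (measurableSet_singleton x)]
  refine measureReal_mono fun ω hω ↦ Nat.le_of_div_mod_ne_zero (q := q) ?_
  simp_all

end Digits

lemma mul_rpow_neg_mul_le_one {A ε q l : ℝ} (hA : 0 < A) (hε : 0 < ε) (hq : 1 ≤ q)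
    (hAq : A ^ (1 / ε) ≤ q) (hl : 1 ≤ l) : A * q ^ (-l * ε) ≤ 1 := by
  have hqε : A ≤ q ^ (l * ε) :=
    calc A = (A ^ (1 / ε)) ^ ε := by rw [← rpow_mul hA.le, one_div_mul_cancel hε.ne', rpow_one]
      _ ≤ q ^ ε := by gcongr
      _ ≤ q ^ (l * ε) := rpow_le_rpow_of_exponent_le hq (by nlinarith)
  rw [neg_mul, rpow_neg (by linarith), ← div_eq_mul_inv, div_le_one (by positivity)]
  exact hqε

lemma one_sub_log_mul_rpow_add_log_le {A ε q l : ℝ} (hA : 0 < A) (hq₀ : 0 < q)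
    (hq : 1 ≤ log q) (hl : 1 ≤ l) :
    1 - log (A * q ^ (-l * ε)) + log q ≤ l * (2 + ε + |log A|) * log q := by
  rw [log_mul hA.ne' (by positivity), log_rpow hq₀]
  have hlq : 1 ≤ l * log q := one_le_mul_of_one_le_of_one_le hl hq
  nlinarith [neg_le_abs (log A), abs_nonneg (log A)]

/-- If `X` is a nonnegative integer random variable with power-law tail
`P(X ≥ x) ≤ A·x^(−ε)`, then for all sufficiently large `q` and all `l ≥ 1`, the `q`-ary
entropy `h_l` of the `l`-th digit of `X` in base `q` satisfies `h_l ≤ B·l·q^(−lε)`,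
with `B` and the threshold on `q` depending only on `A` and `ε`. -/
theorem digit_entropy_tail_bound (A ε : ℝ) (hA : 0 < A) (hε : 0 < ε) :
    ∃ B : ℝ, 0 < B ∧ ∃ q₀ : ℕ, ∀ (Ω : Type) (_ : MeasurableSpace Ω) (μ : Measure Ω),
      IsProbabilityMeasure μ → ∀ X : Ω → ℕ, Measurable X →
      (∀ x : ℕ, 1 ≤ x → (μ {ω | x ≤ X ω}).toReal ≤ A * (x : ℝ) ^ (-ε)) →
      ∀ q : ℕ, q₀ ≤ q → ∀ l : ℕ, 1 ≤ l →
      -(∑ x ∈ Finset.range q,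
          (μ {ω | X ω / q ^ l % q = x}).toReal *
            Real.logb q ((μ {ω | X ω / q ^ l % q = x}).toReal))
        ≤ B * l * (q : ℝ) ^ (-(l : ℝ) * ε) := by
  refine ⟨A * (2 + ε + |log A|), by positivity, max 3 ⌈A ^ (1 / ε)⌉₊, ?_⟩
  intro Ω _ μ _ X hX htail q hq l hl
  have hq₃ : (3 : ℝ) ≤ q := by exact_mod_cast le_of_max_le_left hq
  have hAq : A ^ (1 / ε) ≤ q := Nat.ceil_le.1 (le_of_max_le_right hq)
  have hlogq := one_le_log_of_three_le hq₃
  have hl' : (1 : ℝ) ≤ l := by exact_mod_cast hl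
  set u := A * (q : ℝ) ^ (-(l : ℝ) * ε)
  have htail_u : μ.real {ω | q ^ l ≤ X ω} ≤ u := by
    have h := htail (q ^ l) (Nat.one_le_pow _ _ (by omega))
    rwa [Nat.cast_pow, ← rpow_natCast, ← rpow_mul (by positivity), mul_neg, ← neg_mul] at h
  have hentropy := sum_negMulLog_le_of_sum_erase_le (mem_range.2 (by omega))
    (fun _ _ ↦ measureReal_nonneg) (sum_measureReal_digit_eq_one hX (by omega) (q ^ l))
    (by positivity) (mul_rpow_neg_mul_le_one hA hε (by linarith) hAq hl')
    ((sum_measureReal_digit_ne_zero_le hX q (q ^ l)).trans htail_u)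
  rw [card_range] at hentropy
  change -∑ x ∈ range q, μ.real _ * logb q (μ.real _) ≤ _
  rw [neg_sum_mul_logb_eq_sum_negMulLog_div, div_le_iff₀ (by linarith)]
  calc _ ≤ u * (1 - log u + log q) := hentropy
    _ ≤ u * (l * (2 + ε + |log A|) * log q) := by
        gcongr
        exact one_sub_log_mul_rpow_add_log_le hA (by linarith) hlogq hl'
    _ = _ := by ring
end

section
/- If X is a nonnegative integer random variable with P(X ≥ x) ≤ A·x^(−ε), then for all sufficiently large q, |H_2(X) − Σ_{l≥0} h_l·log_2 q| ≤ C·q^(−ε)·(log_2 q)^2 for a constant C depending only on A and ε. -/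
open Real Finset

/-!
Work in nats, with `lawOf p f` the law of `f X` for `X ~ p`. Coarsening `X` to its lowest digit
cannot increase entropy, and Gibbs' inequality against the product of the digit laws gives
`H(X) ≤ ∑ h_l`. For `l ≥ 1` the digit `l` of `X` is nonzero only if `X ≥ q ^ l`, an event of
probability `t ≤ A q^(-lε)`; a law on `q` points giving mass `1 - t` to `0` has entropy at most
`t (1 + log q) + negMulLog t`, so `h_l = O(l q^(-lε) log q)` and `∑_{l ≥ 1} h_l = O(q^(-ε) log q)`.
-/

namespace Real

lemma negMulLog_eq_mul_log_inv (x : ℝ) : negMulLog x = x * log x⁻¹ := by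
  rw [log_inv, negMulLog]; ring

lemma negMulLog_le_mul_log_inv_add_sub {p r : ℝ} (hp : 0 ≤ p) (hr : 0 ≤ r)
    (hpr : 0 < p → 0 < r) : negMulLog p ≤ p * log r⁻¹ + (r - p) := by
  rcases hp.eq_or_lt with rfl | hp
  · simpa using hr
  have hr := hpr hp
  have h := mul_le_mul_of_nonneg_left (log_le_sub_one_of_pos (div_pos hr hp)) hp.le
  rw [log_div hr.ne' hp.ne', mul_sub_one, mul_div_cancel₀ _ hp.ne'] at h
  rw [negMulLog, log_inv]
  linarith

lemma negMulLog_monotoneOn : MonotoneOn negMulLog (Set.Icc 0 (exp (-1))) := by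
  refine monotoneOn_of_deriv_nonneg (convex_Icc _ _) continuous_negMulLog.continuousOn
    (differentiableOn_negMulLog.mono fun x hx => ?_) fun x hx => ?_
  · rw [interior_Icc] at hx
    exact hx.1.ne'
  · rw [interior_Icc] at hx
    have h := log_lt_log hx.1 hx.2
    rw [log_exp] at h
    rw [deriv_negMulLog hx.1.ne']
    linarith

lemma sum_negMulLog_le {ι : Type*} (s : Finset ι) {P : ι → ℝ} (hP : ∀ x ∈ s, 0 ≤ P x) :
    ∑ x ∈ s, negMulLog (P x) ≤ (∑ x ∈ s, P x) * log #s + negMulLog (∑ x ∈ s, P x) := by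
  rcases s.eq_empty_or_nonempty with rfl | hs
  · simp
  have hn : (0 : ℝ) < #s := by exact_mod_cast hs.card_pos
  have hw : ∑ _x ∈ s, (#s : ℝ)⁻¹ = 1 := by simp [hn.ne']
  have h := concaveOn_negMulLog.le_map_sum (fun _ _ => inv_nonneg.2 hn.le) hw hP
  simp only [smul_eq_mul, ← mul_sum] at h
  rw [negMulLog_mul, negMulLog_eq_mul_log_inv, inv_inv] at h
  have h' := mul_le_mul_of_nonneg_left h hn.le
  field_simp at h'
  linarith

lemma sum_range_negMulLog_le_of_sum_eq_one {P : ℕ → ℝ} {q : ℕ} (hq : 0 < q) (hP : ∀ x, 0 ≤ P x)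
    (h1 : ∑ x ∈ range q, P x = 1) :
    ∑ x ∈ range q, negMulLog (P x) ≤ (1 - P 0) * (1 + log q) + negMulLog (1 - P 0) := by
  obtain ⟨k, rfl⟩ := Nat.exists_eq_add_of_le' hq
  rw [sum_range_succ'] at h1 ⊢
  have ht : ∑ x ∈ range k, P (x + 1) = 1 - P 0 := by linarith
  have hk := sum_negMulLog_le (range k) fun x _ => hP (x + 1)
  rw [ht, card_range] at hk
  have ht0 : 0 ≤ 1 - P 0 := ht ▸ sum_nonneg fun x _ => hP (x + 1)
  have hlog : log k ≤ log (k + 1 : ℕ) := by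
    rcases k.eq_zero_or_pos with rfl | hk0
    · simp
    · exact log_le_log (by positivity) (by push_cast; linarith)
  nlinarith [negMulLog_le_one_sub_self (hP 0), mul_le_mul_of_nonneg_left hlog ht0]

end Real

section Law

variable {ι α : Type*} [DecidableEq α] {p : ι → ℝ}

noncomputable def lawOf (p : ι → ℝ) (f : ι → α) (x : α) : ℝ := ∑' n, if f n = x then p n else 0

lemma summable_ite_of_nonneg (hp : ∀ n, 0 ≤ p n) (hps : Summable p) (P : ι → Prop)
    [DecidablePred P] : Summable fun n => if P n then p n else 0 :=
  hps.of_nonneg_of_le (fun n => by split_ifs <;> simp [hp n])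
    (fun n => by split_ifs <;> simp [hp n])

lemma lawOf_nonneg (hp : ∀ n, 0 ≤ p n) (f : ι → α) (x : α) : 0 ≤ lawOf p f x :=
  tsum_nonneg fun n => by split_ifs <;> simp [hp n]

lemma lawOf_le_one (hp : ∀ n, 0 ≤ p n) (hps : Summable p) (h1 : ∑' n, p n = 1)
    (f : ι → α) (x : α) : lawOf p f x ≤ 1 :=
  h1 ▸ (summable_ite_of_nonneg hp hps _).tsum_le_tsum
    (fun n => by split_ifs <;> simp [hp n]) hps

lemma le_lawOf (hp : ∀ n, 0 ≤ p n) (hps : Summable p) (f : ι → α) (n : ι) :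
    p n ≤ lawOf p f (f n) := by
  simpa [lawOf] using (summable_ite_of_nonneg hp hps (f · = f n)).le_tsum n
    (fun j _ => by split_ifs <;> simp [hp j])

lemma hasSum_mul_comp_lawOf (hp : ∀ n, 0 ≤ p n) (hps : Summable p) {f : ι → α}
    {s : Finset α} (hf : ∀ n, f n ∈ s) (c : α → ℝ) :
    HasSum (fun n => p n * c (f n)) (∑ x ∈ s, lawOf p f x * c x) := by
  have h : (fun n => p n * c (f n)) = fun n => ∑ x ∈ s, (if f n = x then p n else 0) * c x := by
    funext n
    simp [ite_mul, hf n]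
  rw [h]
  exact hasSum_sum fun x _ => (summable_ite_of_nonneg hp hps _).hasSum.mul_right (c x)

lemma sum_lawOf_eq_one (hp : ∀ n, 0 ≤ p n) (hps : Summable p) (h1 : ∑' n, p n = 1)
    {f : ι → α} {s : Finset α} (hf : ∀ n, f n ∈ s) : ∑ x ∈ s, lawOf p f x = 1 := by
  simpa [h1] using ((hasSum_mul_comp_lawOf hp hps hf fun _ => 1).tsum_eq).symm

lemma hasSum_mul_log_inv_lawOf (hp : ∀ n, 0 ≤ p n) (hps : Summable p) {f : ι → α}
    {s : Finset α} (hf : ∀ n, f n ∈ s) :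
    HasSum (fun n => p n * log (lawOf p f (f n))⁻¹) (∑ x ∈ s, negMulLog (lawOf p f x)) := by
  simpa only [negMulLog_eq_mul_log_inv] using
    hasSum_mul_comp_lawOf hp hps hf fun x => log (lawOf p f x)⁻¹

lemma sum_negMulLog_lawOf_le_tsum (hp : ∀ n, 0 ≤ p n) (hps : Summable p) {f : ι → α}
    {s : Finset α} (hf : ∀ n, f n ∈ s) (hS : Summable fun n => negMulLog (p n)) :
    ∑ x ∈ s, negMulLog (lawOf p f x) ≤ ∑' n, negMulLog (p n) := by
  refine hasSum_le (fun n => ?_) (hasSum_mul_log_inv_lawOf hp hps hf) hS.hasSum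
  rcases (hp n).eq_or_lt with h | h
  · simp [← h]
  rw [negMulLog_eq_mul_log_inv]
  have hle := le_lawOf hp hps f n
  exact mul_le_mul_of_nonneg_left (log_le_log (inv_pos.2 (h.trans_le hle)) (inv_anti₀ h hle)) h.le

end Law

def digit (q l n : ℕ) : ℕ := n / q ^ l % q

lemma digit_lt {q : ℕ} (hq : 0 < q) (l n : ℕ) : digit q l n < q := Nat.mod_lt _ hq

lemma digit_eq_zero_of_lt {q l n : ℕ} (h : n < q ^ l) : digit q l n = 0 := by
  simp [digit, Nat.div_eq_of_lt h]

lemma sum_range_pow_prod_digit {R : Type*} [CommSemiring R] (q M : ℕ) (g : ℕ → ℕ → R) :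
    ∑ n ∈ range (q ^ M), ∏ l ∈ range M, g l (digit q l n)
      = ∏ l ∈ range M, ∑ x ∈ range q, g l x := by
  simp only [← Fin.sum_univ_eq_sum_range, ← Fin.prod_univ_eq_prod_range, Fintype.prod_sum]
  refine Fintype.sum_equiv finFunctionFinEquiv.symm _ _ fun n => ?_
  simp [digit, finFunctionFinEquiv_symm_apply_val]

noncomputable def digitEntropy (p : ℕ → ℝ) (q l : ℕ) : ℝ :=
  ∑ x ∈ range q, negMulLog (lawOf p (digit q l) x)

section DigitEntropy

variable {p : ℕ → ℝ} {q : ℕ}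

lemma digitEntropy_nonneg (hp : ∀ n, 0 ≤ p n) (hps : Summable p) (h1 : ∑' n, p n = 1)
    (l : ℕ) : 0 ≤ digitEntropy p q l :=
  sum_nonneg fun x _ => negMulLog_nonneg (lawOf_nonneg hp _ x) (lawOf_le_one hp hps h1 _ x)

lemma digitEntropy_zero_le_tsum (hp : ∀ n, 0 ≤ p n) (hps : Summable p) (hq : 0 < q)
    (hS : Summable fun n => negMulLog (p n)) : digitEntropy p q 0 ≤ ∑' n, negMulLog (p n) :=
  sum_negMulLog_lawOf_le_tsum hp hps (fun n => mem_range.2 (digit_lt hq 0 n)) hS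

lemma sum_range_negMulLog_le (hp : ∀ n, 0 ≤ p n) (hps : Summable p) (h1 : ∑' n, p n = 1)
    (hq : 1 < q) (hH : Summable (digitEntropy p q)) (M : ℕ) :
    ∑ n ∈ range M, negMulLog (p n)
      ≤ ∑' l, digitEntropy p q l + (1 - ∑ n ∈ range M, p n) := by
  set P := fun l => lawOf p (digit q l)
  set r := fun n => ∏ l ∈ range M, P l (digit q l n)
  have hdig : ∀ l n, digit q l n ∈ range q := fun l n => mem_range.2 (digit_lt (by omega) l n)
  have hlog_nonneg : ∀ l n, 0 ≤ p n * log (P l (digit q l n))⁻¹ := fun l n =>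
    mul_nonneg (hp n) (by
      rw [log_inv]
      exact neg_nonneg.2 (log_nonpos (lawOf_nonneg hp _ _) (lawOf_le_one hp hps h1 _ _)))
  have hr : ∑ n ∈ range M, r n ≤ 1 := calc
    ∑ n ∈ range M, r n ≤ ∑ n ∈ range (q ^ M), r n :=
      sum_le_sum_of_subset_of_nonneg (range_subset_range.2 (Nat.lt_pow_self hq).le)
        fun n _ _ => prod_nonneg fun l _ => lawOf_nonneg hp _ _
    _ = 1 := by
      rw [sum_range_pow_prod_digit]
      exact prod_eq_one fun l _ => sum_lawOf_eq_one hp hps h1 (hdig l)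
  have hlog : ∀ n, p n * log (r n)⁻¹ = ∑ l ∈ range M, p n * log (P l (digit q l n))⁻¹ := by
    intro n
    rcases (hp n).eq_or_lt with h | h
    · simp [← h]
    have hP : ∀ l ∈ range M, P l (digit q l n) ≠ 0 := fun l _ =>
      (h.trans_le (le_lawOf hp hps _ n)).ne'
    simp only [r, log_inv, log_prod hP, ← mul_sum, sum_neg_distrib]
  have hpr : ∀ n, 0 < p n → 0 < r n := fun n h =>
    prod_pos fun l _ => h.trans_le (le_lawOf hp hps _ n)
  calc ∑ n ∈ range M, negMulLog (p n)
      ≤ ∑ n ∈ range M, (p n * log (r n)⁻¹ + (r n - p n)) :=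
        sum_le_sum fun n _ => negMulLog_le_mul_log_inv_add_sub (hp n)
          (prod_nonneg fun l _ => lawOf_nonneg hp _ _) (hpr n)
    _ = ∑ l ∈ range M, ∑ n ∈ range M, p n * log (P l (digit q l n))⁻¹
          + (∑ n ∈ range M, r n - ∑ n ∈ range M, p n) := by
        rw [sum_add_distrib, sum_sub_distrib, sum_congr rfl fun n _ => hlog n, sum_comm]
    _ ≤ ∑ l ∈ range M, digitEntropy p q l + (1 - ∑ n ∈ range M, p n) := by
        gcongr with l
        exact sum_le_hasSum _ (fun n _ => hlog_nonneg l n)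
          (hasSum_mul_log_inv_lawOf hp hps (hdig l))
    _ ≤ ∑' l, digitEntropy p q l + (1 - ∑ n ∈ range M, p n) := by
        gcongr
        exact hH.sum_le_tsum _ fun l _ => digitEntropy_nonneg hp hps h1 l

lemma summable_negMulLog (hp : ∀ n, 0 ≤ p n) (hps : Summable p) (h1 : ∑' n, p n = 1)
    (hq : 1 < q) (hH : Summable (digitEntropy p q)) : Summable fun n => negMulLog (p n) :=
  summable_of_sum_range_le (c := ∑' l, digitEntropy p q l + 1)
    (fun n => negMulLog_nonneg (hp n) (h1 ▸ hps.le_tsum n fun j _ => hp j)) fun M =>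
      (sum_range_negMulLog_le hp hps h1 hq hH M).trans
        (by linarith [sum_nonneg fun n (_ : n ∈ range M) => hp n])

lemma tsum_negMulLog_le_tsum_digitEntropy (hp : ∀ n, 0 ≤ p n) (hps : Summable p)
    (h1 : ∑' n, p n = 1) (hq : 1 < q) (hH : Summable (digitEntropy p q)) :
    ∑' n, negMulLog (p n) ≤ ∑' l, digitEntropy p q l := by
  have hlim := tendsto_const_nhds (x := ∑' l, digitEntropy p q l).add
    (tendsto_const_nhds (x := (1 : ℝ)).sub hps.hasSum.tendsto_sum_nat)
  rw [h1, sub_self, add_zero] at hlim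
  exact le_of_tendsto_of_tendsto' (summable_negMulLog hp hps h1 hq hH).hasSum.tendsto_sum_nat
    hlim (sum_range_negMulLog_le hp hps h1 hq hH)

lemma one_sub_lawOf_digit_zero_le (hp : ∀ n, 0 ≤ p n) (hps : Summable p) (h1 : ∑' n, p n = 1)
    (l : ℕ) : 1 - lawOf p (digit q l) 0 ≤ ∑' n, if q ^ l ≤ n then p n else 0 := by
  have hs := summable_ite_of_nonneg hp hps (digit q l · = 0)
  rw [← h1, lawOf, ← hps.tsum_sub hs]
  refine (hps.sub hs).tsum_le_tsum (fun n => ?_) (summable_ite_of_nonneg hp hps _)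
  by_cases h : q ^ l ≤ n
  · split_ifs <;> simp [hp n]
  · simp [h, digit_eq_zero_of_lt (not_le.1 h)]

lemma digitEntropy_le (hp : ∀ n, 0 ≤ p n) (hps : Summable p) (h1 : ∑' n, p n = 1)
    (hq : 0 < q) {l : ℕ} {τ : ℝ} (hτ : τ ≤ exp (-1)) (ht : 1 - lawOf p (digit q l) 0 ≤ τ) :
    digitEntropy p q l ≤ τ * (1 + log q) + negMulLog τ := by
  have ht0 : 0 ≤ 1 - lawOf p (digit q l) 0 := sub_nonneg.2 (lawOf_le_one hp hps h1 _ _)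
  refine (sum_range_negMulLog_le_of_sum_eq_one hq (lawOf_nonneg hp _)
    (sum_lawOf_eq_one hp hps h1 fun n => mem_range.2 (digit_lt hq l n))).trans ?_
  exact add_le_add (by gcongr) (negMulLog_monotoneOn ⟨ht0, ht.trans hτ⟩ ⟨ht0.trans ht, hτ⟩ ht)

lemma digitEntropy_le_mul_pow (hp : ∀ n, 0 ≤ p n) (hps : Summable p) (h1 : ∑' n, p n = 1)
    {A ε : ℝ} (hA : 0 < A)
    (htail : ∀ x : ℕ, 1 ≤ x → (∑' n, if x ≤ n then p n else 0) ≤ A * (x : ℝ) ^ (-ε))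
    (hq : 3 ≤ q) (hr1 : (q : ℝ) ^ (-ε) ≤ 1) (hAr : A * (q : ℝ) ^ (-ε) ≤ exp (-1))
    {l : ℕ} (hl : 1 ≤ l) :
    digitEntropy p q l ≤ A * (2 + |log A| + ε) * log q * (l * ((q : ℝ) ^ (-ε)) ^ l) := by
  set r := (q : ℝ) ^ (-ε) with hr
  have hq0 : (0 : ℝ) < q := by positivity
  have hr0 : 0 < r := rpow_pos_of_pos hq0 _
  have hlogq : 1 ≤ log q := by
    have : (3 : ℝ) ≤ q := by exact_mod_cast hq
    rw [le_log_iff_exp_le hq0]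
    linarith [exp_one_lt_d9]
  have hτ : A * r ^ l ≤ exp (-1) :=
    le_trans (by gcongr; exact pow_le_of_le_one hr0.le hr1 (by omega)) hAr
  have ht : 1 - lawOf p (digit q l) 0 ≤ A * r ^ l := by
    refine (one_sub_lawOf_digit_zero_le hp hps h1 l).trans
      ((htail _ (Nat.one_le_pow _ _ (by omega))).trans_eq ?_)
    rw [hr, rpow_pow_comm hq0.le, Nat.cast_pow]
  have hneg : negMulLog (A * r ^ l) = A * r ^ l * (-log A + l * ε * log q) := by
    rw [negMulLog, log_mul hA.ne' (pow_pos hr0 l).ne', log_pow, hr, log_rpow hq0]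
    ring
  have hl' : (1 : ℝ) ≤ l := by exact_mod_cast hl
  have hlL : 1 ≤ l * log q := by nlinarith
  have key : (1 + log q) + (-log A + l * ε * log q) ≤ (2 + |log A| + ε) * (l * log q) := by
    nlinarith [neg_le_abs (log A), mul_le_mul_of_nonneg_left hlL (abs_nonneg (log A))]
  calc digitEntropy p q l ≤ A * r ^ l * (1 + log q) + negMulLog (A * r ^ l) :=
        digitEntropy_le hp hps h1 (by omega) hτ ht
    _ = A * r ^ l * ((1 + log q) + (-log A + l * ε * log q)) := by rw [hneg]; ring
    _ ≤ A * r ^ l * ((2 + |log A| + ε) * (l * log q)) := by gcongr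
    _ = A * (2 + |log A| + ε) * log q * (l * r ^ l) := by ring

end DigitEntropy

section Series

variable {f : ℕ → ℝ} {c r : ℝ}

lemma summable_of_le_natCast_mul_pow (hf : ∀ n, 0 ≤ f n) (hr0 : 0 ≤ r) (hr1 : r < 1)
    (h : ∀ n, 1 ≤ n → f n ≤ c * (n * r ^ n)) : Summable f := by
  have hg : Summable fun n : ℕ => c * (n * r ^ n) := by
    simpa using (summable_pow_mul_geometric_of_norm_lt_one 1
      (by rwa [norm_of_nonneg hr0] : ‖r‖ < 1)).mul_left c
  exact (summable_nat_add_iff 1).1 <| ((summable_nat_add_iff 1).2 hg).of_nonneg_of_le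
    (fun n => hf _) fun n => h (n + 1) (by omega)

lemma tsum_le_add_of_le_natCast_mul_pow (hf : ∀ n, 0 ≤ f n) (hr0 : 0 < r) (hr : r ≤ 1 / 2)
    (h : ∀ n, 1 ≤ n → f n ≤ c * (n * r ^ n)) : ∑' n, f n ≤ f 0 + 4 * c * r := by
  have hc : 0 ≤ c := nonneg_of_mul_nonneg_left ((hf 1).trans (by simpa using h 1 le_rfl)) hr0
  have hr1 : ‖r‖ < 1 := by rw [norm_of_nonneg hr0.le]; linarith
  have hg : Summable fun n : ℕ => c * (n * r ^ n) := by
    simpa using (summable_pow_mul_geometric_of_norm_lt_one 1 hr1).mul_left c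
  have hfs := summable_of_le_natCast_mul_pow hf hr0.le (by linarith) h
  have hgeom : r / (1 - r) ^ 2 ≤ 4 * r := by
    rw [div_le_iff₀ (by nlinarith)]
    nlinarith [mul_nonneg (mul_nonneg hr0.le (by linarith : 0 ≤ 1 - 2 * r))
      (by linarith : 0 ≤ 3 - 2 * r)]
  calc ∑' n, f n = f 0 + ∑' n, f (n + 1) := hfs.tsum_eq_zero_add
    _ ≤ f 0 + ∑' n : ℕ, c * ((n + 1 : ℕ) * r ^ (n + 1)) :=
        add_le_add le_rfl <| ((summable_nat_add_iff 1).2 hfs).tsum_le_tsum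
          (fun n => h (n + 1) (by omega)) ((summable_nat_add_iff 1).2 hg)
    _ = f 0 + c * (r / (1 - r) ^ 2) := by
        rw [← tsum_coe_mul_geometric_of_norm_lt_one hr1, ← tsum_mul_left, hg.tsum_eq_zero_add]
        simp
    _ ≤ f 0 + 4 * c * r := by nlinarith [mul_le_mul_of_nonneg_left hgeom hc]

end Series

theorem abs_tsum_negMulLog_sub_tsum_digitEntropy_le {p : ℕ → ℝ} (hp : ∀ n, 0 ≤ p n)
    (hps : Summable p) (h1 : ∑' n, p n = 1) {A ε : ℝ} (hA : 0 < A)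
    (htail : ∀ x : ℕ, 1 ≤ x → (∑' n, if x ≤ n then p n else 0) ≤ A * (x : ℝ) ^ (-ε))
    {q : ℕ} (hq : 3 ≤ q) (hr : (q : ℝ) ^ (-ε) ≤ 1 / 2) (hAr : A * (q : ℝ) ^ (-ε) ≤ exp (-1)) :
    |∑' n, negMulLog (p n) - ∑' l, digitEntropy p q l|
      ≤ 4 * (A * (2 + |log A| + ε) * log q) * (q : ℝ) ^ (-ε) := by
  have hr0 : 0 < (q : ℝ) ^ (-ε) := by positivity
  have hlevel := fun l => digitEntropy_le_mul_pow hp hps h1 hA htail hq (by linarith) hAr (l := l)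
  have hH := summable_of_le_natCast_mul_pow (digitEntropy_nonneg hp hps h1) hr0.le (by linarith)
    hlevel
  have hupper := tsum_le_add_of_le_natCast_mul_pow (digitEntropy_nonneg hp hps h1) hr0 hr hlevel
  have hS := tsum_negMulLog_le_tsum_digitEntropy hp hps h1 (by omega) hH
  have h0 := digitEntropy_zero_le_tsum (q := q) hp hps (by omega)
    (summable_negMulLog hp hps h1 (by omega) hH)
  rw [abs_sub_comm, abs_of_nonneg (by linarith)]
  linarith

lemma eventually_natCast_rpow_neg_le {ε : ℝ} (hε : 0 < ε) {b : ℝ} (hb : 0 < b) :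
    ∀ᶠ q : ℕ in Filter.atTop, (q : ℝ) ^ (-ε) ≤ b :=
  ((tendsto_rpow_neg_atTop hε).comp tendsto_natCast_atTop_atTop).eventually (eventually_le_nhds hb)

lemma tsum_neg_mul_logb (b : ℝ) (f : ℕ → ℝ) :
    ∑' n, -(f n * logb b (f n)) = (∑' n, negMulLog (f n)) / log b := by
  rw [← tsum_div_const]
  congr 1 with n
  rw [logb, negMulLog]
  ring

lemma abs_tsum_neg_mul_logb_sub_eq (p : ℕ → ℝ) {q : ℕ} (hq : 1 < q) :
    |(∑' n, -(p n * logb 2 (p n)))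
        - (∑' l, -(∑ x ∈ range q, lawOf p (digit q l) x * logb q (lawOf p (digit q l) x)))
          * logb 2 q|
      = |∑' n, negMulLog (p n) - ∑' l, digitEntropy p q l| / log 2 := by
  have hlogq : log q ≠ 0 := (log_pos (by exact_mod_cast hq)).ne'
  have hH : ∀ l, -(∑ x ∈ range q, lawOf p (digit q l) x * logb q (lawOf p (digit q l) x))
      = digitEntropy p q l / log q := fun l => by
    simp only [digitEntropy, logb, negMulLog, sum_div, ← sum_neg_distrib]
    congr 1 with x
    ring
  rw [tsum_neg_mul_logb, tsum_congr hH, tsum_div_const, logb, div_mul_div_cancel₀ hlogq,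
    ← sub_div, abs_div, abs_of_pos (log_pos one_lt_two)]

/-- For a power-law tailed integer distribution `p`, for all sufficiently large `q`,
the binary entropy `H₂(X)` differs from `(Σ_l h_l)·log₂ q` (the sum of the base-`q` digit
entropies, in bits) by at most `C·q^(−ε)·(log₂ q)²`, with `C` and the threshold on `q`
depending only on `A` and `ε`. -/
theorem entropy_digit_sum_approx (A ε : ℝ) (hA : 0 < A) (hε : 0 < ε) :
    ∃ C : ℝ, 0 < C ∧ ∃ q₀ : ℕ, ∀ p : ℕ → ℝ, (∀ n, 0 ≤ p n) → Summable p →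
      (∑' n, p n) = 1 →
      (∀ x : ℕ, 1 ≤ x → (∑' n : ℕ, if x ≤ n then p n else 0) ≤ A * (x : ℝ) ^ (-ε)) →
      ∀ q : ℕ, q₀ ≤ q →
      |(∑' n : ℕ, -(p n * Real.logb 2 (p n)))
          - (∑' l : ℕ, -(∑ x ∈ Finset.range q,
              (∑' n : ℕ, if n / q ^ l % q = x then p n else 0) *
                Real.logb q (∑' n : ℕ, if n / q ^ l % q = x then p n else 0)))
            * Real.logb 2 q|
        ≤ C * (q : ℝ) ^ (-ε) * (Real.logb 2 q) ^ 2 := by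
  obtain ⟨q₀, hq₀⟩ := Filter.eventually_atTop.1 <| (Filter.eventually_ge_atTop 3).and <|
    (eventually_natCast_rpow_neg_le hε one_half_pos).and
      (eventually_natCast_rpow_neg_le hε (div_pos (exp_pos (-1)) hA))
  refine ⟨4 * (A * (2 + |log A| + ε)), by positivity, q₀, fun p hp hps h1 htail q hq => ?_⟩
  obtain ⟨hq3, hr, hAr⟩ := hq₀ q hq
  have hlogb : 1 ≤ logb 2 q := by
    rw [le_logb_iff_rpow_le one_lt_two (by positivity), rpow_one]
    exact_mod_cast hq3.trans' (by norm_num)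
  -- `lawOf` and `digit` unfold to the expressions of the statement
  calc _ = |∑' n, negMulLog (p n) - ∑' l, digitEntropy p q l| / log 2 :=
        abs_tsum_neg_mul_logb_sub_eq p (by omega)
    _ ≤ 4 * (A * (2 + |log A| + ε) * log q) * (q : ℝ) ^ (-ε) / log 2 := by
        gcongr
        exact abs_tsum_negMulLog_sub_tsum_digitEntropy_le hp hps h1 hA htail hq3 hr
          (by rwa [le_div_iff₀' hA] at hAr)
    _ = 4 * (A * (2 + |log A| + ε)) * (q : ℝ) ^ (-ε) * logb 2 q := by rw [logb]; ring
    _ ≤ 4 * (A * (2 + |log A| + ε)) * (q : ℝ) ^ (-ε) * logb 2 q ^ 2 := by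
        gcongr
        exact le_self_pow₀ hlogb two_ne_zero
end

section
/- Let p* be a probability distribution on {0,…,q−1} and define the typical set T_n(p*) ⊆ {0,…,q−1}^n to consist of vectors x whose empirical type θ_x satisfies D(θ_x || p*) ≤ n^(−γ), where 0 < γ < 1. Then for any β ∈ (1−γ/2, 1) there exists A = A(β,γ,q) such that |T_n(p*)| ≤ q^(n·H(p*) + A·n^β), where H(p*) is the q-ary entropy of p*. -/
/-!
Under the product measure `pⁿ`, a vector `x` of type `θ` has probability
`exp (-n (D(θ‖p) + H(θ)))`. Coordinatewise Pinsker gives `|θ - p| ≤ √(2ε)` when `D(θ‖p) ≤ ε`,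
and `t ↦ t log t` is `c`-Hölder on `[0, 1]` for every `c < 1`, so `H(θ) ≤ H(p) + O(ε^(c/2))`.
Every typical vector therefore has probability at least `exp (-n H(p) - O(n ε^(c/2)))`, and as
these probabilities sum to at most `1`, there are at most `exp (n H(p) + O(n ε^(c/2)))` of them.
With `ε = n^(-γ)` and `c = 2(1 - β)/γ < 1` the error term is `O(n^β)`.
-/

open Real Finset

lemma sq_sub_div_two_le_mul_log_div_sub_add {x y : ℝ} (hx0 : 0 ≤ x) (hx1 : x ≤ 1)
    (hy0 : 0 < y) (hy1 : y ≤ 1) : (x - y) ^ 2 / 2 ≤ x * log (x / y) - x + y := by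
  rcases hx0.eq_or_lt with rfl | hx
  · simp only [zero_sub, even_two, Even.neg_pow, zero_div, log_zero, mul_zero]
    nlinarith
  rcases le_total y x with hyx | hxy
  · -- `log (x / y) = log ((1 + w) / (1 - w)) ≥ 2 w` for `w = (x - y) / (x + y)`
    obtain ⟨w, hw⟩ : ∃ w, w = (x - y) / (x + y) := ⟨_, rfl⟩
    have hw0 : 0 ≤ w := hw ▸ div_nonneg (by linarith) (by linarith)
    have hw1 : w < 1 := hw ▸ (div_lt_one (by linarith)).2 (by linarith)
    have hlog : 2 * w ≤ log (x / y) := by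
      have h := sum_range_le_log_div hw0 hw1 1
      have hxy : (1 + w) / (1 - w) = x / y := by
        rw [div_eq_div_iff (sub_pos.2 hw1).ne' hy0.ne', hw]
        field_simp
        ring
      simp only [range_one, sum_singleton, mul_zero, zero_add, pow_one, Nat.cast_zero,
        div_one, hxy] at h
      linarith
    have key : x * (2 * w) - x + y = (x - y) ^ 2 / (x + y) := by
      rw [hw]; field_simp; ring
    calc (x - y) ^ 2 / 2 ≤ (x - y) ^ 2 / (x + y) := by gcongr; linarith
      _ = x * (2 * w) - x + y := key.symm
      _ ≤ x * log (x / y) - x + y := by gcongr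
  · have hlog : (x / y - y / x) / 2 ≤ log (x / y) := by
      have h : sinh (log (x / y)) ≤ log (x / y) :=
        sinh_le_self_iff.2 (log_nonpos (by positivity) ((div_le_one hy0).2 hxy))
      rwa [sinh_log (by positivity), inv_div] at h
    have key : x * ((x / y - y / x) / 2) - x + y = (x - y) ^ 2 / (2 * y) := by
      field_simp; ring
    calc (x - y) ^ 2 / 2 ≤ (x - y) ^ 2 / (2 * y) := by gcongr; linarith
      _ = x * ((x / y - y / x) / 2) - x + y := key.symm
      _ ≤ x * log (x / y) - x + y := by gcongr

lemma negMulLog_le_rpow_div {d c : ℝ} (hd : 0 ≤ d) (hc : c < 1) :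
    negMulLog d ≤ d ^ c / (1 - c) := by
  rcases hd.eq_or_lt with rfl | hd
  · simp only [negMulLog_zero]
    exact div_nonneg (rpow_nonneg le_rfl c) (by linarith)
  have h := log_le_rpow_div (inv_nonneg.2 hd.le) (sub_pos.2 hc)
  calc negMulLog d = d * log d⁻¹ := by rw [negMulLog, log_inv]; ring
    _ ≤ d * (d⁻¹ ^ (1 - c) / (1 - c)) := by gcongr
    _ = d ^ c / (1 - c) := by
      have : d * d⁻¹ ^ (1 - c) = d ^ c := by
        rw [inv_rpow hd.le, ← rpow_neg hd.le]
        conv_rhs => rw [show c = 1 + -(1 - c) by ring, rpow_add hd, rpow_one]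
      rw [mul_div_assoc', this]

lemma abs_mul_log_sub_mul_log_le {x y : ℝ} (hx0 : 0 ≤ x) (hx1 : x ≤ 1) (hy0 : 0 ≤ y)
    (hy1 : y ≤ 1) : |x * log x - y * log y| ≤ |x - y| + negMulLog |x - y| := by
  wlog hyx : y ≤ x with H
  · rw [abs_sub_comm (x * log x), abs_sub_comm x]
    exact H hy0 hy1 hx0 hx1 (le_of_not_ge hyx)
  rw [abs_of_nonneg (sub_nonneg.2 hyx), negMulLog, abs_le]
  rcases hy0.eq_or_lt with rfl | hy
  · have := mul_log_nonpos hx0 hx1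
    constructor <;> simp only [log_zero, mul_zero, sub_zero] <;> nlinarith
  have hx : 0 < x := hy.trans_le hyx
  constructor
  · -- `x log x = y log x + (x - y) log x ≥ y log y + (x - y) log (x - y)`
    rcases (sub_nonneg.2 hyx).eq_or_lt with hd | hd
    · rw [← hd]; simp [show x = y by linarith]
    have h1 : y * log y ≤ y * log x := by gcongr
    have h2 : (x - y) * log (x - y) ≤ (x - y) * log x := by gcongr; linarith
    nlinarith
  · -- `x log x - y log y = (x - y) log x + y log (x / y) ≤ 0 + y (x / y - 1)`
    have h1 : (x - y) * log x ≤ 0 :=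
      mul_nonpos_of_nonneg_of_nonpos (by linarith) (log_nonpos hx0 hx1)
    have h2 : y * log (x / y) ≤ x - y := by
      have := log_le_sub_one_of_pos (div_pos hx hy)
      calc y * log (x / y) ≤ y * (x / y - 1) := by gcongr
        _ = x - y := by field_simp
    rw [log_div hx.ne' hy.ne'] at h2
    have := mul_log_nonpos (sub_nonneg.2 hyx) (by linarith : x - y ≤ 1)
    nlinarith

lemma abs_mul_log_sub_mul_log_le_rpow {x y c : ℝ} (hc : c < 1) (hx0 : 0 ≤ x) (hx1 : x ≤ 1)
    (hy0 : 0 ≤ y) (hy1 : y ≤ 1) :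
    |x * log x - y * log y| ≤ (1 + 1 / (1 - c)) * |x - y| ^ c := by
  have hd1 : |x - y| ≤ 1 := abs_sub_le_iff.2 ⟨by linarith, by linarith⟩
  calc |x * log x - y * log y| ≤ |x - y| + negMulLog |x - y| :=
        abs_mul_log_sub_mul_log_le hx0 hx1 hy0 hy1
    _ ≤ |x - y| ^ c + |x - y| ^ c / (1 - c) :=
        add_le_add (self_le_rpow_of_le_one (abs_nonneg _) hd1 hc.le)
          (negMulLog_le_rpow_div (abs_nonneg _) hc)
    _ = (1 + 1 / (1 - c)) * |x - y| ^ c := by ring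

section Distribution

variable {α : Type*} [Fintype α] {θ p : α → ℝ}

lemma le_one_of_sum_eq_one (h0 : ∀ z, 0 ≤ p z) (h1 : ∑ z, p z = 1) (z : α) : p z ≤ 1 :=
  h1 ▸ single_le_sum (fun w _ => h0 w) (mem_univ z)

lemma sum_mul_log_div_eq_sub (hsupp : ∀ z, p z = 0 → θ z = 0) :
    ∑ z, θ z * log (θ z / p z) = ∑ z, θ z * log (θ z) - ∑ z, θ z * log (p z) := by
  rw [← sum_sub_distrib]
  refine sum_congr rfl fun z _ => ?_
  by_cases hθ : θ z = 0
  · simp [hθ]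
  rw [log_div hθ (mt (hsupp z) hθ), mul_sub]

lemma sq_sub_le_two_mul_sum_mul_log_div (hθ0 : ∀ z, 0 ≤ θ z) (hθ1 : ∑ z, θ z = 1)
    (hp0 : ∀ z, 0 ≤ p z) (hp1 : ∑ z, p z = 1) (hsupp : ∀ z, p z = 0 → θ z = 0) (z : α) :
    (θ z - p z) ^ 2 ≤ 2 * ∑ w, θ w * log (θ w / p w) := by
  have hterm : ∀ w, (θ w - p w) ^ 2 / 2 ≤ θ w * log (θ w / p w) - θ w + p w := by
    intro w
    rcases (hp0 w).eq_or_lt with hpw | hpw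
    · simp [← hpw, hsupp w hpw.symm]
    exact sq_sub_div_two_le_mul_log_div_sub_add (hθ0 w) (le_one_of_sum_eq_one hθ0 hθ1 w) hpw
      (le_one_of_sum_eq_one hp0 hp1 w)
  have hsum : ∑ w, (θ w * log (θ w / p w) - θ w + p w) = ∑ w, θ w * log (θ w / p w) := by
    rw [sum_add_distrib, sum_sub_distrib, hθ1, hp1, sub_add_cancel]
  have := single_le_sum (fun w _ => (div_nonneg (sq_nonneg _) two_pos.le).trans (hterm w))
    (mem_univ z)
  linarith [hterm z]

lemma sum_mul_log_le_add_of_abs_sub_le {c δ : ℝ} (hc0 : 0 ≤ c) (hc1 : c < 1)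
    (hθ0 : ∀ z, 0 ≤ θ z) (hθ1 : ∑ z, θ z = 1) (hp0 : ∀ z, 0 ≤ p z) (hp1 : ∑ z, p z = 1)
    (hδ : ∀ z, |θ z - p z| ≤ δ) :
    ∑ z, p z * log (p z) ≤
      ∑ z, θ z * log (θ z) + Fintype.card α * ((1 + 1 / (1 - c)) * δ ^ c) := by
  have hz : ∀ z, p z * log (p z) - θ z * log (θ z) ≤ (1 + 1 / (1 - c)) * δ ^ c := fun z =>
    calc p z * log (p z) - θ z * log (θ z) ≤ |p z * log (p z) - θ z * log (θ z)| := le_abs_self _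
      _ ≤ (1 + 1 / (1 - c)) * |p z - θ z| ^ c :=
        abs_mul_log_sub_mul_log_le_rpow hc1 (hp0 z) (le_one_of_sum_eq_one hp0 hp1 z) (hθ0 z)
          (le_one_of_sum_eq_one hθ0 hθ1 z)
      _ ≤ (1 + 1 / (1 - c)) * δ ^ c := by
        gcongr
        rw [abs_sub_comm]; exact hδ z
  have := sum_le_sum fun z (_ : z ∈ univ) => hz z
  rw [sum_sub_distrib, sum_const, card_univ, nsmul_eq_mul] at this
  linarith

lemma neg_sum_mul_log_le_of_sum_mul_log_div_le {c ε : ℝ} (hc0 : 0 ≤ c) (hc1 : c < 1)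
    (hθ0 : ∀ z, 0 ≤ θ z) (hθ1 : ∑ z, θ z = 1) (hp0 : ∀ z, 0 ≤ p z) (hp1 : ∑ z, p z = 1)
    (hsupp : ∀ z, p z = 0 → θ z = 0) (hε : ∑ z, θ z * log (θ z / p z) ≤ ε) :
    -∑ z, θ z * log (p z) ≤
      -∑ z, p z * log (p z) + ε + Fintype.card α * ((1 + 1 / (1 - c)) * √(2 * ε) ^ c) := by
  have hδ : ∀ z, |θ z - p z| ≤ √(2 * ε) := fun z => abs_le_sqrt <|
    (sq_sub_le_two_mul_sum_mul_log_div hθ0 hθ1 hp0 hp1 hsupp z).trans (by linarith)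
  have := sum_mul_log_le_add_of_abs_sub_le hc0 hc1 hθ0 hθ1 hp0 hp1 hδ
  rw [sum_mul_log_div_eq_sub hsupp] at hε
  linarith

end Distribution

section EmpiricalDist

variable {α : Type*} {n : ℕ}

noncomputable def empiricalDist (x : Fin n → α) (z : α) : ℝ := Nat.card {i // x i = z} / n

lemma empiricalDist_nonneg (x : Fin n → α) (z : α) : 0 ≤ empiricalDist x z := by
  unfold empiricalDist; positivity

variable [Fintype α]

lemma sum_card_fiber {ι : Type*} [Fintype ι] (x : ι → α) :
    ∑ z, Nat.card {i // x i = z} = Fintype.card ι := by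
  classical
  simp only [Nat.card_eq_fintype_card, Fintype.card_subtype]
  exact (card_eq_sum_card_fiberwise fun i _ => mem_univ (x i)).symm

lemma prod_apply_eq_prod_pow_card {ι M : Type*} [Fintype ι] [CommMonoid M] (x : ι → α)
    (p : α → M) : ∏ i, p (x i) = ∏ z, p z ^ Nat.card {i // x i = z} := by
  classical
  simp only [Nat.card_eq_fintype_card, Fintype.card_subtype]
  rw [← prod_fiberwise' univ x p]
  exact prod_congr rfl fun z _ => prod_const _

lemma sum_empiricalDist (hn : 0 < n) (x : Fin n → α) : ∑ z, empiricalDist x z = 1 := by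
  simp only [empiricalDist, ← sum_div]
  rw [← Nat.cast_sum, sum_card_fiber, Fintype.card_fin, div_self (by positivity)]

lemma prod_apply_eq_exp (hn : 0 < n) {p : α → ℝ} (hp0 : ∀ z, 0 ≤ p z) (x : Fin n → α)
    (hsupp : ∀ z, p z = 0 → Nat.card {i // x i = z} = 0) :
    ∏ i, p (x i) = exp (n * ∑ z, empiricalDist x z * log (p z)) := by
  rw [prod_apply_eq_prod_pow_card, mul_sum, exp_sum]
  refine prod_congr rfl fun z _ => ?_
  rw [empiricalDist, ← mul_assoc, mul_div_cancel₀ _ (by positivity : (n : ℝ) ≠ 0)]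
  rcases (hp0 z).eq_or_lt with hp | hp
  · simp [hsupp z hp.symm]
  rw [← rpow_natCast, rpow_def_of_pos hp, mul_comm]

lemma card_le_exp_of_exp_neg_le_prod {p : α → ℝ} (hp0 : ∀ z, 0 ≤ p z) (hp1 : ∑ z, p z = 1)
    {P : (Fin n → α) → Prop} {s : ℝ} (h : ∀ x, P x → exp (-s) ≤ ∏ i, p (x i)) :
    (Nat.card {x // P x} : ℝ) ≤ exp s := by
  classical
  rw [Nat.card_eq_fintype_card, Fintype.card_subtype]
  have hsum : (univ.filter P).card • exp (-s) ≤ ∑ x ∈ univ.filter P, ∏ i, p (x i) :=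
    card_nsmul_le_sum _ _ _ fun x hx => h x (mem_filter.1 hx).2
  have htotal : ∑ x ∈ univ.filter P, ∏ i, p (x i) ≤ 1 := by
    calc _ ≤ ∑ x : Fin n → α, ∏ i, p (x i) :=
          sum_le_sum_of_subset_of_nonneg (filter_subset _ _) fun x _ _ =>
            prod_nonneg fun i _ => hp0 _
      _ = 1 := by rw [← Fintype.sum_pow, hp1, one_pow]
  rw [nsmul_eq_mul, exp_neg] at hsum
  have := hsum.trans htotal
  rwa [← div_eq_mul_inv, div_le_one (exp_pos s)] at this

def IsTypical (p : α → ℝ) (ε : ℝ) (x : Fin n → α) : Prop :=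
  (∀ z, p z = 0 → Nat.card {i // x i = z} = 0) ∧
    ∑ z, empiricalDist x z * log (empiricalDist x z / p z) ≤ ε

lemma card_isTypical_le (hn : 0 < n) {p : α → ℝ} (hp0 : ∀ z, 0 ≤ p z) (hp1 : ∑ z, p z = 1)
    {c ε : ℝ} (hc0 : 0 ≤ c) (hc1 : c < 1) :
    (Nat.card {x : Fin n → α // IsTypical p ε x} : ℝ) ≤
      exp (n * (-∑ z, p z * log (p z) + ε +
        Fintype.card α * ((1 + 1 / (1 - c)) * √(2 * ε) ^ c))) := by
  refine card_le_exp_of_exp_neg_le_prod hp0 hp1 fun x ⟨hsupp, hε⟩ => ?_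
  have hθsupp : ∀ z, p z = 0 → empiricalDist x z = 0 := fun z hz => by
    simp [empiricalDist, hsupp z hz]
  have := neg_sum_mul_log_le_of_sum_mul_log_div_le hc0 hc1 (empiricalDist_nonneg x)
    (sum_empiricalDist hn x) hp0 hp1 hθsupp hε
  rw [prod_apply_eq_exp hn hp0 x hsupp, exp_le_exp]
  nlinarith [mul_le_mul_of_nonneg_left this n.cast_nonneg]

end EmpiricalDist

lemma rpow_neg_add_mul_sqrt_rpow_le {N γ c K : ℝ} (hN : 1 ≤ N) (hγ : 0 ≤ γ)
    (hc2 : c ≤ 2) (hK : 0 ≤ K) :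
    N ^ (-γ) + K * √(2 * N ^ (-γ)) ^ c ≤ (1 + 2 * K) * N ^ (-(γ * c / 2)) := by
  have hN0 : 0 ≤ N := zero_le_one.trans hN
  have hsqrt : √(2 * N ^ (-γ)) ^ c = √2 ^ c * N ^ (-(γ * c / 2)) := by
    rw [sqrt_mul zero_le_two, mul_rpow (sqrt_nonneg 2) (sqrt_nonneg _), sqrt_eq_rpow (N ^ (-γ)),
      ← rpow_mul hN0, ← rpow_mul hN0]
    ring_nf
  have h2 : √2 ^ c ≤ 2 := by
    calc √2 ^ c ≤ √2 ^ (2 : ℝ) :=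
          rpow_le_rpow_of_exponent_le (one_le_sqrt.2 one_le_two) hc2
      _ = 2 := by rw [rpow_two, sq_sqrt zero_le_two]
  have hNγ : N ^ (-γ) ≤ N ^ (-(γ * c / 2)) :=
    rpow_le_rpow_of_exponent_le hN (by nlinarith)
  rw [hsqrt]
  have := rpow_nonneg hN0 (-(γ * c / 2))
  nlinarith [mul_le_mul_of_nonneg_right h2 this]

theorem typical_set_size_general (q : ℕ) (hq : 2 ≤ q) (γ : ℝ) (hγ0 : 0 < γ)
    (β : ℝ) (hβ0 : 1 - γ / 2 < β) (hβ1 : β < 1) :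
    ∃ A : ℝ, 0 < A ∧ ∀ n : ℕ, 1 ≤ n → ∀ p : Fin q → ℝ,
      (∀ z, 0 ≤ p z) → (∑ z, p z) = 1 →
      (Nat.card {x : Fin n → Fin q //
          (∀ z : Fin q, p z = 0 → Nat.card {i : Fin n // x i = z} = 0) ∧
          (∑ z : Fin q, ((Nat.card {i : Fin n // x i = z} : ℝ) / n) *
              Real.log (((Nat.card {i : Fin n // x i = z} : ℝ) / n) / p z))
            ≤ (n : ℝ) ^ (-γ)} : ℝ)
        ≤ (q : ℝ) ^ ((n : ℝ) * (-∑ z : Fin q, p z * Real.logb q (p z)) + A * (n : ℝ) ^ β) := by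
  set c := 2 * (1 - β) / γ
  have hc0 : 0 ≤ c := div_nonneg (by linarith) hγ0.le
  have hc1 : c < 1 := (div_lt_one hγ0).2 (by linarith)
  have hγc : -(γ * c / 2) = β - 1 := by simp only [c]; field_simp; ring
  have h1c : 0 < 1 - c := sub_pos.2 hc1
  set K := 1 + 2 * (q * (1 + 1 / (1 - c)))
  have hK : 0 < K := by positivity
  have hlogq : 0 < log q := log_pos (by exact_mod_cast hq)
  refine ⟨K / log q, div_pos hK hlogq, fun n hn p hp0 hp1 => ?_⟩
  have hn' : (1 : ℝ) ≤ n := by exact_mod_cast hn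
  have herr := rpow_neg_add_mul_sqrt_rpow_le (c := c) (K := q * (1 + 1 / (1 - c))) hn' hγ0.le
    (by linarith) (by positivity)
  rw [hγc] at herr
  have hent : log q * (-∑ z, p z * logb q (p z)) = -∑ z, p z * log (p z) := by
    rw [mul_neg, mul_sum]
    congr 1; refine sum_congr rfl fun z _ => ?_
    rw [logb]; field_simp
  calc _ ≤ exp (n * (-∑ z, p z * log (p z) + n ^ (-γ) +
        Fintype.card (Fin q) * ((1 + 1 / (1 - c)) * √(2 * n ^ (-γ)) ^ c))) :=
        card_isTypical_le hn hp0 hp1 hc0 hc1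
    _ ≤ exp (n * (-∑ z, p z * log (p z)) + K * n ^ β) := by
        have hnβ : (n : ℝ) * n ^ (β - 1) = n ^ β := by
          rw [rpow_sub_one (by positivity), mul_div_cancel₀ _ (by positivity)]
        rw [exp_le_exp, Fintype.card_fin, ← hnβ]
        nlinarith [mul_le_mul_of_nonneg_left herr n.cast_nonneg]
    _ = _ := by
        rw [rpow_def_of_pos (x := (q : ℝ)) (by positivity)]
        congr 1
        rw [mul_add, mul_left_comm, hent]
        field_simp

/-- Size of the typical set: for a distribution `p*` on `{0,…,q−1}`, the set of vectors
`x ∈ {0,…,q−1}^n` whose empirical type `θ_x` satisfies `D(θ_x‖p*) ≤ n^(−γ)` has at most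
`q^(n·H(p*) + A·n^β)` elements, for any `β ∈ (1−γ/2, 1)` and a constant `A = A(β,γ,q)`.
Typicality includes the support condition `p*(z) = 0 → θ_x(z) = 0`, matching the KL
divergence convention `D = +∞` otherwise. -/
theorem typical_set_size (q : ℕ) (hq : 2 ≤ q) (γ : ℝ) (hγ0 : 0 < γ) (hγ1 : γ < 1)
    (β : ℝ) (hβ0 : 1 - γ / 2 < β) (hβ1 : β < 1) :
    ∃ A : ℝ, 0 < A ∧ ∀ n : ℕ, 1 ≤ n → ∀ p : Fin q → ℝ,
      (∀ z, 0 ≤ p z) → (∑ z, p z) = 1 →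
      (Nat.card {x : Fin n → Fin q //
          (∀ z : Fin q, p z = 0 → Nat.card {i : Fin n // x i = z} = 0) ∧
          (∑ z : Fin q, ((Nat.card {i : Fin n // x i = z} : ℝ) / n) *
              Real.log (((Nat.card {i : Fin n // x i = z} : ℝ) / n) / p z))
            ≤ (n : ℝ) ^ (-γ)} : ℝ)
        ≤ (q : ℝ) ^ ((n : ℝ) * (-∑ z : Fin q, p z * Real.logb q (p z)) + A * (n : ℝ) ^ β) :=
  typical_set_size_general q hq γ hγ0 β hβ0 hβ1
end

section
/- Let U_1,…,U_{q−1} be independent Poisson random variables with means λ_z ≥ 0, let s = Σ_{z=1}^{q−1} λ_z, and D_q = 1 − cos(2π/q). Then P(Σ_{z=1}^{q−1} z·U_z ≡ 0 mod q) ≤ (1/q)·[1 + (q−1)·e^{−D_q·s}]. -/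
/-!
Write `P(λ, k) = e^{-λ} λ^k / k!` and `ω = e^{2πi/q}`. Filtering by the roots of unity,
`q · 1[q ∣ N] = Σ_{ℓ<q} ω^{ℓN}`, and the Poisson generating function
`Σ_k P(λ, k) ζ^k = e^{-λ(1-ζ)}` factorises the sum over all `u` as a product, so
`q · P(q ∣ Σ z U_z) = Re Σ_{ℓ<q} Π_z exp(-λ_z (1 - ω^{ℓz}))`. The `ℓ = 0` term is `1`; for
`0 < ℓ < q` primality gives `q ∤ ℓz`, hence `Re ω^{ℓz} ≤ cos(2π/q)` and each remaining term has
modulus at most `e^{-D_q s}`.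
-/

open Real Complex Finset Nat

theorem summable_norm_prod_pi_and_hasSum {R β : Type*} [NormedCommRing R] [CompleteSpace R] :
    ∀ {n : ℕ} (f : Fin n → β → R), (∀ i, Summable fun b => ‖f i b‖) →
      (Summable fun u : Fin n → β => ‖∏ i, f i (u i)‖) ∧
        HasSum (fun u : Fin n → β => ∏ i, f i (u i)) (∏ i, ∑' b, f i b)
  | 0, f, _ => ⟨.of_finite, by simp⟩
  | n + 1, f, hf => by
    obtain ⟨ih_norm, ih⟩ := summable_norm_prod_pi_and_hasSum (fun i => f i.succ) fun i => hf i.succ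
    let tail := fun u : Fin n → β => ∏ i : Fin n, f i.succ (u i)
    let e := Fin.consEquiv fun _ : Fin (n + 1) => β
    have hcons : (fun u => ∏ i, f i (u i)) ∘ e = fun x => f 0 x.1 * tail x.2 := by
      funext x; simp [e, tail, Fin.consEquiv, Fin.prod_univ_succ]
    constructor
    · rw [← e.summable_iff]
      exact ((hf 0).mul_norm ih_norm).congr fun x => congrArg norm (congrFun hcons x).symm
    · rw [← e.hasSum_iff, hcons, Fin.prod_univ_succ]
      -- `f` and `g` are given explicitly: inferring them by higher-order unification times out.
      exact HasSum.mul (f := f 0) (g := tail) (hf 0).of_norm.hasSum ih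
        (summable_mul_of_summable_norm (f := f 0) (g := tail) (hf 0) ih_norm)

theorem hasSum_poisson_mul_pow (c ζ : ℂ) :
    HasSum (fun k : ℕ => exp (-c) * c ^ k / k ! * ζ ^ k) (exp (-c * (1 - ζ))) := by
  have h := (NormedSpace.expSeries_div_hasSum_exp (c * ζ)).mul_left (exp (-c))
  rw [← Complex.exp_eq_exp_ℂ, ← Complex.exp_add, show -c + c * ζ = -c * (1 - ζ) by ring] at h
  exact h.congr_fun fun k => by ring

theorem summable_norm_poisson_mul_pow (c ζ : ℂ) :
    Summable fun k : ℕ => ‖exp (-c) * c ^ k / k ! * ζ ^ k‖ := by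
  refine ((NormedSpace.norm_expSeries_div_summable (c * ζ)).mul_left ‖exp (-c)‖).congr fun k => ?_
  rw [← norm_mul]
  ring_nf

theorem hasSum_prod_poisson_mul_pow {n : ℕ} (lam : Fin n → ℝ) (w : Fin n → ℕ) (ζ : ℂ) :
    HasSum (fun u : Fin n → ℕ =>
        ((∏ z, Real.exp (-lam z) * lam z ^ u z / (u z)! : ℝ) : ℂ) * ζ ^ ∑ z, w z * u z)
      (∏ z, exp (-lam z * (1 - ζ ^ w z))) := by
  have h := (summable_norm_prod_pi_and_hasSum
    (fun z k => exp (-(lam z : ℂ)) * (lam z : ℂ) ^ k / k ! * (ζ ^ w z) ^ k)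
    fun z => summable_norm_poisson_mul_pow _ _).2
  simp only [fun z => (hasSum_poisson_mul_pow (lam z) (ζ ^ w z)).tsum_eq] at h
  refine h.congr_fun fun u => ?_
  push_cast
  rw [← prod_pow_eq_pow_sum, ← prod_mul_distrib]
  simp only [pow_mul]

theorem IsPrimitiveRoot.sum_range_pow_pow {R : Type*} [CommRing R] [IsDomain R] {ζ : R} {q : ℕ}
    (hζ : IsPrimitiveRoot ζ q) (N : ℕ) :
    ∑ l ∈ range q, (ζ ^ l) ^ N = if q ∣ N then (q : R) else 0 := by
  simp_rw [← pow_mul, mul_comm _ N, pow_mul]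
  split_ifs with h
  · simp [(hζ.pow_eq_one_iff_dvd N).2 h]
  · have hgeom := geom_sum_mul (ζ ^ N) q
    rw [← pow_mul, mul_comm N q, pow_mul, hζ.pow_eq_one, one_pow, sub_self] at hgeom
    exact (mul_eq_zero.1 hgeom).resolve_right (sub_ne_zero.2 (mt (hζ.pow_eq_one_iff_dvd N).1 h))

theorem tsum_poisson_mul_ite_mod_eq {n q : ℕ} (hq : 0 < q) {ω : ℂ} (hω : IsPrimitiveRoot ω q)
    (lam : Fin n → ℝ) (w : Fin n → ℕ) :
    ∑' u : Fin n → ℕ, (∏ z, Real.exp (-lam z) * lam z ^ u z / (u z)!) *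
        (if (∑ z, w z * u z) % q = 0 then 1 else 0) =
      (∑ l ∈ range q, ∏ z, exp (-lam z * (1 - (ω ^ l) ^ w z))).re / q := by
  have hfourier : HasSum (fun u : Fin n → ℕ => (q : ℝ) *
      ((∏ z, Real.exp (-lam z) * lam z ^ u z / (u z)!) *
        (if (∑ z, w z * u z) % q = 0 then 1 else 0)))
      (∑ l ∈ range q, ∏ z, exp (-lam z * (1 - (ω ^ l) ^ w z))).re := by
    convert Complex.hasSum_re (hasSum_sum fun l (_ : l ∈ range q) =>
      hasSum_prod_poisson_mul_pow lam w (ω ^ l)) using 2 with u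
    rw [← mul_sum, hω.sum_range_pow_pow]
    simp only [Nat.dvd_iff_mod_eq_zero]
    split_ifs
    · rw [mul_one, ← ofReal_natCast, ← ofReal_mul, ofReal_re, mul_comm]
    · simp
  have hq0 : (q : ℝ) ≠ 0 := by exact_mod_cast hq.ne'
  simpa only [mul_div_cancel_left₀ _ hq0] using (hfourier.div_const (q : ℝ)).tsum_eq

theorem Real.cos_two_pi_mul_div_le {q m : ℕ} (hm : ¬ q ∣ m) :
    Real.cos (2 * π * m / q) ≤ Real.cos (2 * π / q) := by
  rcases q.eq_zero_or_pos with rfl | hq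
  · simp
  have hqR : (0 : ℝ) < q := by exact_mod_cast hq
  set n := round ((m : ℝ) / q)
  set t : ℤ := m - q * n
  have ht : t ≠ 0 := fun h => hm (Int.natCast_dvd_natCast.1 ⟨n, by linarith⟩)
  have hθ : 2 * π * m / q - n * (2 * π) = 2 * π * t / q := by
    simp only [t]; push_cast; field_simp
  have ht_le : |(t : ℝ)| ≤ q / 2 := by
    have := abs_sub_round ((m : ℝ) / q)
    rwa [show (m : ℝ) / q - n = t / q by simp only [t]; push_cast; field_simp,
      abs_div, Nat.abs_cast, div_le_iff₀ hqR, one_div_mul_eq_div] at this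
  have ht_ge : (1 : ℝ) ≤ |(t : ℝ)| := by exact_mod_cast Int.one_le_abs ht
  rw [← Real.cos_sub_int_mul_two_pi _ n, hθ, ← Real.cos_abs]
  have habs : |2 * π * t / q| = 2 * π * |(t : ℝ)| / q := by
    rw [abs_div, abs_mul, abs_of_pos two_pi_pos, Nat.abs_cast]
  apply Real.cos_le_cos_of_nonneg_of_le_pi (by positivity)
  · rw [habs, div_le_iff₀ hqR]; nlinarith [pi_pos]
  · rw [habs, div_le_div_iff_of_pos_right hqR]; nlinarith [pi_pos]

theorem norm_exp_neg_mul_one_sub_pow_le {q m : ℕ} (hm : ¬ q ∣ m) {lam : ℝ} (hlam : 0 ≤ lam) :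
    ‖exp (-lam * (1 - exp (2 * π * I / q) ^ m))‖ ≤
      Real.exp (-(1 - Real.cos (2 * π / q)) * lam) := by
  have hre : (exp (2 * π * I / q) ^ m).re = Real.cos (2 * π * m / q) := by
    rw [← Complex.exp_nat_mul, ← exp_ofReal_mul_I_re]
    push_cast
    ring_nf
  rw [Complex.norm_exp, Real.exp_le_exp]
  simp only [mul_re, neg_re, ofReal_re, neg_im, ofReal_im, sub_re, one_re, hre, sub_im, one_im]
  nlinarith [Real.cos_two_pi_mul_div_le hm]

theorem norm_prod_exp_neg_mul_one_sub_pow_le {q l : ℕ} (hq : q.Prime) (hl0 : 0 < l) (hlq : l < q)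
    (lam : Fin (q - 1) → ℝ) (hlam : ∀ z, 0 ≤ lam z) :
    ‖∏ z : Fin (q - 1), exp (-lam z * (1 - (exp (2 * π * I / q) ^ l) ^ ((z : ℕ) + 1)))‖ ≤
      Real.exp (-(1 - Real.cos (2 * π / q)) * ∑ z, lam z) := by
  have hndvd : ∀ z : Fin (q - 1), ¬ q ∣ l * ((z : ℕ) + 1) := fun z h =>
    (hq.dvd_mul.1 h).elim (fun h => (Nat.le_of_dvd hl0 h).not_gt hlq)
      fun h => (Nat.le_of_dvd z.succ_pos h).not_gt (by omega)
  rw [norm_prod, mul_sum, Real.exp_sum]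
  refine prod_le_prod (fun _ _ => norm_nonneg _) fun z _ => ?_
  rw [← pow_mul]
  exact norm_exp_neg_mul_one_sub_pow_le (hndvd z) (hlam z)

theorem re_sum_range_le_of_norm_le {f : ℕ → ℂ} {q : ℕ} (hq : 0 < q) {B : ℝ} (h0 : f 0 = 1)
    (hf : ∀ l, 0 < l → l < q → ‖f l‖ ≤ B) :
    (∑ l ∈ range q, f l).re ≤ 1 + (q - 1) * B := by
  obtain ⟨n, rfl⟩ := Nat.exists_eq_add_one_of_ne_zero hq.ne'
  rw [sum_range_succ', h0, add_re, re_sum, one_re, add_comm, Nat.cast_succ, add_sub_cancel_right]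
  gcongr
  simpa using sum_le_card_nsmul (range n) _ B fun l hl =>
    (re_le_norm _).trans (hf (l + 1) l.succ_pos (by simpa using hl))

/-- For independent Poisson variables `U_z` with means `λ_z` (`z = 1,…,q−1`, `q` prime),
with `s = Σ_z λ_z` and `D_q = 1 − cos(2π/q)`, the probability that `Σ_z z·U_z ≡ 0 mod q`
is at most `(1/q)·[1 + (q−1)·e^{−D_q·s}]`. -/
theorem poisson_divisibility_bound (q : ℕ) (hq : q.Prime)
    (lam : Fin (q - 1) → ℝ) (hlam : ∀ z, 0 ≤ lam z) :
    (∑' u : Fin (q - 1) → ℕ,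
        (∏ z : Fin (q - 1), Real.exp (-lam z) * lam z ^ u z / (u z).factorial) *
          (if (∑ z : Fin (q - 1), ((z : ℕ) + 1) * u z) % q = 0 then 1 else 0))
      ≤ (1 / (q : ℝ)) * (1 + ((q : ℝ) - 1) *
          Real.exp (-(1 - Real.cos (2 * Real.pi / q)) * ∑ z : Fin (q - 1), lam z)) := by
  rw [tsum_poisson_mul_ite_mod_eq hq.pos (isPrimitiveRoot_exp q hq.ne_zero), one_div_mul_eq_div]
  gcongr
  exact re_sum_range_le_of_norm_le hq.pos (by simp) fun l hl0 hlq =>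
    norm_prod_exp_neg_mul_one_sub_pow_le hq hl0 hlq lam hlam
end

section
/- Suppose a sequence of counter braids with n input nodes and m_n registers of capacity q satisfies m_n·log_2 q / n → r with r < H_2(p), where inputs X_1,…,X_n are iid with distribution p on the nonnegative integers. Then for any sequence of reconstruction functions F̂_n : Z_q^{m_n} → N^n, the error probability P(F̂_n(Y) ≠ X) is bounded away from 0 for large n; i.e., no reliable counter braid exists at rates below the entropy. -/
/-!
Merging all source symbols `k ≥ N` into one (the law of `min X N`) gives a finite alphabet whose
entropy still exceeds the rate `r` once `N` is large. A decoder that is right on a set of inputs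
stays right on its image under the merging, which has at most `q ^ m n ≤ 2 ^ (n R)` elements for
some `r < R`. For a finite alphabet, Chebyshev's inequality for the sum of the informations
`-log₂ w(Yᵢ)` shows that outside a set of vanishing mass every sequence has probability at most
`2 ^ (-n (H - ε))`; so any `2 ^ (n R)` sequences carry vanishing mass, and the probability of
decoding correctly tends to `0`.
-/

open Real Filter Finset

section IIDSums

variable {α : Type*} [Fintype α] {w f : α → ℝ}

theorem sum_pi_fin_succ {M : Type*} [AddCommMonoid M] {n : ℕ} (g : (Fin (n + 1) → α) → M) :
    ∑ y, g y = ∑ a, ∑ y : Fin n → α, g (Fin.cons a y) :=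
  (Fintype.sum_equiv (Fin.consEquiv _) _ _ fun _ => rfl).symm.trans
    (Fintype.sum_prod_type' fun a y => g (Fin.cons a y))

theorem sum_prod_eq_one (hw : ∑ a, w a = 1) (n : ℕ) : ∑ y : Fin n → α, ∏ i, w (y i) = 1 := by
  rw [← Fintype.sum_pow, hw, one_pow]

theorem sum_prod_mul_sum_eq_zero (hw : ∑ a, w a = 1) (hf : ∑ a, w a * f a = 0) (n : ℕ) :
    ∑ y : Fin n → α, (∏ i, w (y i)) * ∑ i, f (y i) = 0 := by
  induction n with
  | zero => simp
  | succ n ih =>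
    have (a : α) (y : Fin n → α) : (w a * ∏ i, w (y i)) * (f a + ∑ i, f (y i)) =
        w a * f a * ∏ i, w (y i) + w a * ((∏ i, w (y i)) * ∑ i, f (y i)) := by
      ring
    simp only [sum_pi_fin_succ, Fin.prod_univ_succ, Fin.sum_univ_succ, Fin.cons_zero,
      Fin.cons_succ, this, sum_add_distrib, ← mul_sum, ih, sum_prod_eq_one hw, ← sum_mul, hf]
    simp

theorem sum_prod_mul_sum_sq (hw : ∑ a, w a = 1) (hf : ∑ a, w a * f a = 0) (n : ℕ) :
    ∑ y : Fin n → α, (∏ i, w (y i)) * (∑ i, f (y i)) ^ 2 = n * ∑ a, w a * f a ^ 2 := by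
  induction n with
  | zero => simp
  | succ n ih =>
    have (a : α) (y : Fin n → α) : (w a * ∏ i, w (y i)) * (f a + ∑ i, f (y i)) ^ 2 =
        w a * f a ^ 2 * ∏ i, w (y i) + 2 * (w a * f a) * ((∏ i, w (y i)) * ∑ i, f (y i)) +
          w a * ((∏ i, w (y i)) * (∑ i, f (y i)) ^ 2) := by
      ring
    simp only [sum_pi_fin_succ, Fin.prod_univ_succ, Fin.sum_univ_succ, Fin.cons_zero,
      Fin.cons_succ, this, sum_add_distrib, ← mul_sum, ih, sum_prod_mul_sum_eq_zero hw hf,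
      sum_prod_eq_one hw, ← sum_mul, hw, hf]
    push_cast
    ring

end IIDSums

theorem prod_le_rpow_sum_logb {ι : Type*} (s : Finset ι) {x : ι → ℝ} (hx : ∀ i ∈ s, 0 ≤ x i)
    {b : ℝ} (hb : 0 < b) (hb1 : b ≠ 1) : ∏ i ∈ s, x i ≤ b ^ ∑ i ∈ s, logb b (x i) := by
  by_cases hzero : ∃ i ∈ s, x i = 0
  · rw [prod_eq_zero_iff.mpr hzero]
    positivity
  · rw [rpow_sum_of_pos hb]
    refine (prod_congr rfl fun i hi => rpow_logb hb hb1 ?_).ge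
    exact (hx i hi).lt_of_ne' fun h => hzero ⟨i, hi, h⟩

theorem Finset.sum_filter_le_sum_mul_sq_div_sq {ι : Type*} (s : Finset ι) {P : ι → ℝ}
    (hP : ∀ y ∈ s, 0 ≤ P y) (S : ι → ℝ) {c : ℝ} (hc : 0 < c) :
    ∑ y ∈ s with c ≤ |S y|, P y ≤ (∑ y ∈ s, P y * S y ^ 2) / c ^ 2 := by
  rw [le_div_iff₀ (by positivity), sum_mul]
  calc ∑ y ∈ s with c ≤ |S y|, P y * c ^ 2
      ≤ ∑ y ∈ s with c ≤ |S y|, P y * S y ^ 2 := by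
        refine sum_le_sum fun y hy => ?_
        rw [mem_filter] at hy
        rw [← sq_abs (S y)]
        exact mul_le_mul_of_nonneg_left (pow_le_pow_left₀ hc.le hy.2 2) (hP y hy.1)
    _ ≤ ∑ y ∈ s, P y * S y ^ 2 :=
        sum_le_sum_of_subset_of_nonneg (filter_subset _ _) fun y hy _ =>
          mul_nonneg (hP y hy) (sq_nonneg _)

section FiniteAlphabet

variable {α : Type*} [Fintype α]

noncomputable def entropyBits (w : α → ℝ) : ℝ := ∑ a, -(w a * logb 2 (w a))

noncomputable def varentropyBits (w : α → ℝ) : ℝ :=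
  ∑ a, w a * (-logb 2 (w a) - entropyBits w) ^ 2

variable {w : α → ℝ}

theorem sum_prod_le_varentropyBits_add (hw0 : ∀ a, 0 ≤ w a) (hw1 : ∑ a, w a = 1) {n : ℕ}
    (hn : n ≠ 0) {ε : ℝ} (hε : 0 < ε) (T : Finset (Fin n → α)) :
    ∑ y ∈ T, ∏ i, w (y i) ≤
      varentropyBits w / (n * ε ^ 2) + T.card * 2 ^ (-(n * (entropyBits w - ε))) := by
  set H := entropyBits w
  set S : (Fin n → α) → ℝ := fun y => ∑ i, (-logb 2 (w (y i)) - H)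
  have hP (y : Fin n → α) : 0 ≤ ∏ i, w (y i) := prod_nonneg fun i _ => hw0 _
  have hcentered : ∑ a, w a * (-logb 2 (w a) - H) = 0 := by
    simp only [mul_sub, sum_sub_distrib, ← sum_mul, hw1, mul_neg]
    simp [H, entropyBits]
  have hnε : 0 < n * ε := by positivity
  rw [← sum_filter_add_sum_filter_not T fun y => n * ε ≤ |S y|]
  gcongr
  · calc ∑ y ∈ T with n * ε ≤ |S y|, ∏ i, w (y i)
        ≤ (∑ y ∈ T, (∏ i, w (y i)) * S y ^ 2) / (n * ε) ^ 2 :=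
          sum_filter_le_sum_mul_sq_div_sq T (fun y _ => hP y) S hnε
      _ ≤ (∑ y, (∏ i, w (y i)) * S y ^ 2) / (n * ε) ^ 2 := by
          gcongr
          · exact fun y _ _ => mul_nonneg (hP y) (sq_nonneg _)
          · exact subset_univ T
      _ = varentropyBits w / (n * ε ^ 2) := by
          rw [sum_prod_mul_sum_sq hw1 hcentered, varentropyBits]
          field_simp
          rfl
  · refine (sum_le_card_nsmul _ _ (2 ^ (-(n * (H - ε)))) fun y hy => ?_).trans ?_
    · have hSy : -S y < n * ε := (neg_le_abs (S y)).trans_lt (not_le.mp (mem_filter.mp hy).2)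
      have hlog : ∑ i, logb 2 (w (y i)) = -S y - n * H := by
        simp [S, sum_sub_distrib]
      calc ∏ i, w (y i) ≤ 2 ^ ∑ i, logb 2 (w (y i)) :=
            prod_le_rpow_sum_logb _ (fun i _ => hw0 _) two_pos (by norm_num)
        _ ≤ 2 ^ (-(n * (H - ε))) := by
            gcongr
            · norm_num
            · rw [hlog]; linarith
    · rw [nsmul_eq_mul]
      gcongr
      exact filter_subset _ _

theorem eventually_sum_prod_le_of_card_le (hw0 : ∀ a, 0 ≤ w a) (hw1 : ∑ a, w a = 1) {R : ℝ}
    (hR : R < entropyBits w) {δ : ℝ} (hδ : 0 < δ) :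
    ∀ᶠ n : ℕ in atTop, ∀ T : Finset (Fin n → α),
      (T.card : ℝ) ≤ 2 ^ (n * R) → ∑ y ∈ T, ∏ i, w (y i) ≤ δ := by
  set ε := (entropyBits w - R) / 2
  have hε : 0 < ε := by simp only [ε]; linarith
  have hlim : Tendsto (fun n : ℕ => varentropyBits w / (n * ε ^ 2) + 2 ^ (-(n * ε))) atTop
      (nhds 0) := by
    have hvar : Tendsto (fun n : ℕ => varentropyBits w / (n * ε ^ 2)) atTop (nhds 0) :=
      (tendsto_const_div_atTop_nhds_zero_nat (varentropyBits w / ε ^ 2)).congr fun n => by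
        rw [div_div, mul_comm]
    have hexp : Tendsto (fun n : ℕ => (2 : ℝ) ^ (-(n * ε))) atTop (nhds 0) :=
      (tendsto_rpow_atBot_of_base_gt_one 2 one_lt_two).comp <|
        tendsto_neg_atTop_atBot.comp (tendsto_natCast_atTop_atTop.atTop_mul_const hε)
    simpa using hvar.add hexp
  filter_upwards [hlim.eventually (eventually_le_nhds hδ), eventually_ne_atTop 0]
    with n hn hn0 T hT
  calc ∑ y ∈ T, ∏ i, w (y i)
      ≤ varentropyBits w / (n * ε ^ 2) + T.card * 2 ^ (-(n * (entropyBits w - ε))) :=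
        sum_prod_le_varentropyBits_add hw0 hw1 hn0 hε T
    _ ≤ varentropyBits w / (n * ε ^ 2) + 2 ^ (n * R) * 2 ^ (-(n * (entropyBits w - ε))) := by
        gcongr
    _ = varentropyBits w / (n * ε ^ 2) + 2 ^ (-(n * ε)) := by
        rw [← rpow_add two_pos]
        congr 2
        simp only [ε]
        ring
    _ ≤ δ := hn

end FiniteAlphabet

theorem hasSum_prod_pi_fin {α : Type*} {p : α → ℝ} (hp0 : ∀ a, 0 ≤ p a) {s : ℝ} (hp : HasSum p s)
    (n : ℕ) : HasSum (fun x : Fin n → α => ∏ i, p (x i)) (s ^ n) := by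
  induction n with
  | zero => simp
  | succ n ih =>
    have hg : 0 ≤ fun x : Fin n → α => ∏ i, p (x i) := fun x => prod_nonneg fun i _ => hp0 _
    have hsum := hp.summable.mul_of_nonneg ih.summable (Pi.le_def.mpr hp0) hg
    have hprod := hp.mul ih hsum
    rw [← (Fin.consEquiv fun _ => α).hasSum_iff, pow_succ']
    refine hprod.congr_fun fun x => ?_
    simp [Fin.prod_univ_succ]

theorem sum_le_tsum_subtype {α : Type*} {p : α → ℝ} (hp0 : ∀ a, 0 ≤ p a) (hps : Summable p)
    {u : Finset α} {t : Set α} (hut : ↑u ⊆ t) : ∑ a ∈ u, p a ≤ ∑' a : t, p a := by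
  rw [_root_.tsum_subtype, ← sum_congr rfl fun a ha => Set.indicator_of_mem (hut ha) p]
  exact (hps.indicator t).sum_le_tsum u fun a _ => Set.indicator_nonneg (fun a _ => hp0 a) a

theorem sum_prod_le_sum_image_prod {α β : Type*} [DecidableEq β] {p : α → ℝ} (hp0 : ∀ a, 0 ≤ p a)
    (hps : Summable p) (φ : α → β) {n : ℕ} (S : Finset (Fin n → α)) :
    ∑ x ∈ S, ∏ i, p (x i) ≤ ∑ y ∈ S.image (φ ∘ ·), ∏ i, ∑' a : φ ⁻¹' {y i}, p a := by
  classical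
  rw [← sum_fiberwise_of_maps_to fun x hx => mem_image_of_mem (φ ∘ ·) hx]
  refine sum_le_sum fun y _ => ?_
  set u := S.filter fun x => φ ∘ x = y
  set s : Fin n → Finset α := fun i => u.image (· i)
  calc ∑ x ∈ u, ∏ i, p (x i)
      ≤ ∑ x ∈ Fintype.piFinset s, ∏ i, p (x i) :=
        sum_le_sum_of_subset_of_nonneg
          (fun x hx => Fintype.mem_piFinset.mpr fun i => mem_image_of_mem _ hx)
          fun x _ _ => prod_nonneg fun i _ => hp0 _
    _ = ∏ i, ∑ a ∈ s i, p a := (prod_univ_sum s fun _ a => p a).symm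
    _ ≤ ∏ i, ∑' a : φ ⁻¹' {y i}, p a := by
        refine prod_le_prod (fun i _ => sum_nonneg fun a _ => hp0 a) fun i _ =>
          sum_le_tsum_subtype hp0 hps fun a ha => ?_
        obtain ⟨x, hx, rfl⟩ := mem_image.mp ha
        simp [← (mem_filter.mp hx).2]

theorem neg_mul_logb_nonneg {x : ℝ} (h0 : 0 ≤ x) (h1 : x ≤ 1) : 0 ≤ -(x * logb 2 x) :=
  neg_nonneg.mpr (mul_nonpos_of_nonneg_of_nonpos h0 (logb_nonpos one_lt_two h0 h1))

noncomputable def clampLaw (p : ℕ → ℝ) (N : ℕ) (b : Fin (N + 1)) : ℝ :=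
  ∑' k : (Fin.clamp · N) ⁻¹' {b}, p k

section ClampLaw

variable {p : ℕ → ℝ}

theorem hasSum_clampLaw {s : ℝ} (hp : HasSum p s) (N : ℕ) : HasSum (clampLaw p N) s :=
  hp.tsum_fiberwise _

theorem clampLaw_castSucc (p : ℕ → ℝ) {N : ℕ} (j : Fin N) : clampLaw p N j.castSucc = p j := by
  have hfiber : (Fin.clamp · N) ⁻¹' {j.castSucc} = {(j : ℕ)} := by
    ext k
    simp [Fin.ext_iff, Fin.clamp]
    omega
  rw [clampLaw, hfiber, tsum_singleton]

theorem sum_range_le_entropyBits_clampLaw (hp0 : ∀ k, 0 ≤ p k) (hp : HasSum p 1) (N : ℕ) :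
    ∑ k ∈ range N, -(p k * logb 2 (p k)) ≤ entropyBits (clampLaw p N) := by
  have hlast0 : 0 ≤ clampLaw p N (Fin.last N) := tsum_nonneg fun k => hp0 k
  have hlast1 : clampLaw p N (Fin.last N) ≤ 1 :=
    le_hasSum (hasSum_clampLaw hp N) _ fun _ _ => tsum_nonneg fun k => hp0 k
  rw [entropyBits, Fin.sum_univ_castSucc]
  simp only [clampLaw_castSucc]
  rw [Fin.sum_univ_eq_sum_range (fun k => -(p k * logb 2 (p k)))]
  exact le_add_of_nonneg_right (neg_mul_logb_nonneg hlast0 hlast1)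

theorem exists_lt_entropyBits_clampLaw (hp0 : ∀ k, 0 ≤ p k) (hp : HasSum p 1)
    (hH : Summable fun k => -(p k * logb 2 (p k))) {r : ℝ}
    (hr : r < ∑' k, -(p k * logb 2 (p k))) : ∃ N, r < entropyBits (clampLaw p N) := by
  obtain ⟨N, hN⟩ := (hH.hasSum.tendsto_sum_nat.eventually (eventually_gt_nhds hr)).exists
  exact ⟨N, hN.trans_le (sum_range_le_entropyBits_clampLaw hp0 hp N)⟩

end ClampLaw

theorem one_sub_sum_le_tsum_prod {α : Type*} {p : α → ℝ} (hp0 : ∀ a, 0 ≤ p a) (hp : HasSum p 1)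
    {n : ℕ} {P : (Fin n → α) → Prop} (S : Finset (Fin n → α)) (hS : ∀ x, ¬P x → x ∈ S) :
    1 - ∑ x ∈ S, ∏ i, p (x i) ≤ ∑' x : {x // P x}, ∏ i, p (x.1 i) := by
  set f : (Fin n → α) → ℝ := fun x => ∏ i, p (x i)
  set s : Set (Fin n → α) := {x | P x}
  have hf : HasSum f 1 := by simpa using hasSum_prod_pi_fin hp0 hp n
  have hsplit : ∑' x : {x // P x}, f x + ∑' x : ↥sᶜ, f x = 1 :=
    ((hf.summable.subtype s).tsum_add_tsum_compl (hf.summable.subtype sᶜ)).trans hf.tsum_eq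
  have hsub : sᶜ ⊆ S := fun x hx => hS x hx
  have hcompl : ∑' x : ↥sᶜ, f x ≤ ∑ x ∈ S, f x := by
    rw [← S.tsum_subtype f]
    exact (hf.summable.subtype sᶜ).tsum_le_tsum_of_inj (Set.inclusion hsub)
      (Set.inclusion_injective hsub) (fun x _ => prod_nonneg fun i _ => hp0 _) (fun _ => le_rfl)
      (S.summable f)
  linarith

theorem summable_of_lt_tsum {ι : Type*} {f : ι → ℝ} {r : ℝ} (hr0 : 0 ≤ r)
    (hr : r < ∑' i, f i) : Summable f := by
  by_contra h
  rw [tsum_eq_zero_of_not_summable h] at hr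
  linarith

theorem eventually_pow_le_two_rpow {q : ℕ} (hq : 0 < q) {m : ℕ → ℕ} {r R : ℝ}
    (hr : Tendsto (fun n : ℕ => (m n : ℝ) * logb 2 q / n) atTop (nhds r)) (hR : r < R) :
    ∀ᶠ n : ℕ in atTop, (q : ℝ) ^ m n ≤ 2 ^ (n * R) := by
  filter_upwards [hr.eventually (eventually_le_nhds hR), eventually_gt_atTop 0] with n h hn
  rw [div_le_iff₀ (by positivity)] at h
  calc (q : ℝ) ^ m n = 2 ^ (m n * logb 2 q) := by
        rw [mul_comm, rpow_mul zero_le_two, rpow_logb two_pos (by norm_num) (by positivity),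
          rpow_natCast]
    _ ≤ 2 ^ (n * R) := rpow_le_rpow_of_exponent_le one_le_two (by linarith)

/-- Converse (impossibility) for counter braids: if the asymptotic rate
`r = lim m_n·log₂ q / n` is below the binary entropy `H₂(p)` of the iid input
distribution `p`, then for any sequence of deterministic storage functions
`F : ℕ^n → Z_q^{m_n}` (in particular the storage function of any counter braid) and any
reconstruction functions `G`, the error probability `P(G(F(X)) ≠ X)` is bounded away
from zero for all large `n`. -/
theorem counter_braid_converse (q : ℕ) (hq : 2 ≤ q) (p : ℕ → ℝ)
    (hp0 : ∀ n, 0 ≤ p n) (hps : Summable p) (hp1 : (∑' n, p n) = 1)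
    (m : ℕ → ℕ) (r : ℝ)
    (hr : Tendsto (fun n : ℕ => (m n : ℝ) * Real.logb 2 q / n) atTop (nhds r))
    (hrH : r < ∑' n : ℕ, -(p n * Real.logb 2 (p n))) :
    ∃ δ : ℝ, 0 < δ ∧ ∃ n₀ : ℕ, ∀ n : ℕ, n₀ ≤ n →
      ∀ (F : (Fin n → ℕ) → (Fin (m n) → ZMod q))
        (G : (Fin (m n) → ZMod q) → (Fin n → ℕ)),
      δ ≤ ∑' x : {x : Fin n → ℕ // G (F x) ≠ x}, ∏ i : Fin n, p (x.val i) := by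
  have hp : HasSum p 1 := hp1 ▸ hps.hasSum
  have hr0 : 0 ≤ r := ge_of_tendsto' hr fun n => by
    have : 0 ≤ logb 2 q := logb_nonneg one_lt_two (by exact_mod_cast one_le_two.trans hq)
    positivity
  obtain ⟨N, hN⟩ := exists_lt_entropyBits_clampLaw hp0 hp (summable_of_lt_tsum hr0 hrH) hrH
  obtain ⟨R, hrR, hRN⟩ := exists_between hN
  have hw0 (b : Fin (N + 1)) : 0 ≤ clampLaw p N b := tsum_nonneg fun k => hp0 k
  have hw1 : ∑ b, clampLaw p N b = 1 := (hasSum_fintype _).unique (hasSum_clampLaw hp N)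
  obtain ⟨n₀, hn₀⟩ := eventually_atTop.mp <| (eventually_pow_le_two_rpow (by omega) hr hrR).and
    (eventually_sum_prod_le_of_card_le hw0 hw1 hRN one_half_pos)
  refine ⟨1 / 2, one_half_pos, n₀, fun n hn F G => ?_⟩
  obtain ⟨hcard, hsmall⟩ := hn₀ n hn
  have : NeZero q := ⟨by omega⟩
  classical
  set S := univ.image G
  have hS (x) (hx : ¬G (F x) ≠ x) : x ∈ S := mem_image.mpr ⟨F x, mem_univ _, not_not.mp hx⟩
  have hcardS : ((S.image fun x i => Fin.clamp (x i) N).card : ℝ) ≤ 2 ^ (n * R) := by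
    have : (S.image fun x i => Fin.clamp (x i) N).card ≤ q ^ m n :=
      card_image_le.trans (card_image_le.trans (by simp))
    exact le_trans (by exact_mod_cast this) hcard
  have hsuccess := (sum_prod_le_sum_image_prod hp0 hps (Fin.clamp · N) S).trans
    (hsmall _ hcardS)
  linarith [one_sub_sum_le_tsum_prod hp0 hp S hS]
end
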